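/- Let E be a Banach lattice with order continuous norm, and let (x_α) be an almost order bounded net in E with x_α uo-converging to x. Then ‖x_α - x‖ → 0. -/

import Mathlib

open Filter Topology MeasureTheory

/-- Order convergence of a net (indexed by a preordered type) in a lattice-ordered group:
there is a net decreasing to `0` eventually dominating `|x α - x₀|`. -/
def OrderConvNet {E : Type*} [Lattice E] [AddCommGroup E] {ι : Type*} [Preorder ι]
    (x : ι → E) (x₀ : E) : Prop :=
  ∃ z : ι → E, Antitone z ∧ IsGLB (Set.range z) 0 ∧ ∀ᶠ α in atTop, |x α - x₀| ≤ z α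

/-- Unbounded order convergence of a net. -/
def UOConvNet {E : Type*} [Lattice E] [AddCommGroup E] {ι : Type*} [Preorder ι]
    (x : ι → E) (x₀ : E) : Prop :=
  ∀ u : E, 0 ≤ u → OrderConvNet (fun α => |x α - x₀| ⊓ u) 0

/-- A normed lattice is a Brezis–Lieb space if `uo`-convergence together with convergence
of norms implies norm convergence, for all nets. -/
def IsBLSpace (E : Type*) [NormedAddCommGroup E] [Lattice E] : Prop :=
  ∀ (ι : Type) [Preorder ι] [IsDirected ι (· ≤ ·)] [Nonempty ι],
    ∀ (x : ι → E) (x₀ : E), UOConvNet x x₀ →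
      Tendsto (fun α => ‖x α‖) atTop (𝓝 ‖x₀‖) →
      Tendsto (fun α => ‖x α - x₀‖) atTop (𝓝 0)

/-- σ-Brezis–Lieb space: the same for sequences. -/
def IsSigmaBLSpace (E : Type*) [NormedAddCommGroup E] [Lattice E] : Prop :=
  ∀ (x : ℕ → E) (x₀ : E), UOConvNet x x₀ →
    Tendsto (fun n => ‖x n‖) atTop (𝓝 ‖x₀‖) →
    Tendsto (fun n => ‖x n - x₀‖) atTop (𝓝 0)

/-- The Brezis–Lieb property of a normed lattice. -/
def HasBLProperty (E : Type*) [NormedAddCommGroup E] [Lattice E] : Prop :=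
  ∀ (u : ℕ → E) (u₀ : E), (∀ n, 0 ≤ u n) → (∀ n, ‖u n‖ = 1) →
    (Pairwise fun n m => u n ⊓ u m = 0) → 0 < u₀ →
    ‖u₀‖ < limsup (fun n => ‖u₀ + u n‖) atTop

/-- The norm is order continuous: every net decreasing to `0` converges to `0` in norm. -/
def HasOrderContinuousNorm (E : Type*) [NormedAddCommGroup E] [Lattice E] : Prop :=
  ∀ (ι : Type) [Preorder ι] [IsDirected ι (· ≤ ·)] [Nonempty ι],
    ∀ x : ι → E, Antitone x → IsGLB (Set.range x) 0 →
      Tendsto (fun α => ‖x α‖) atTop (𝓝 0)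

/-- σ-Dedekind completeness: every order bounded sequence has a supremum. -/
def SigmaDedekindComplete (E : Type*) [Lattice E] : Prop :=
  ∀ (f : ℕ → E) (b : E), (∀ n, f n ≤ b) → ∃ s, IsLUB (Set.range f) s

/-!
Fix `ε > 0` and `u ≥ 0` with `‖(|x α| - u)⁺‖ ≤ ε` for all `α`, and put `v = u + |x₀|`.
Splitting `|x α - x₀| = |x α - x₀| ⊓ v + (|x α - x₀| - v)⁺`, the first summand
order-converges to `0` by uo-convergence, hence tends to `0` in norm by order continuity,
while the second is dominated by `(|x α| - u)⁺` and so has norm at most `ε`.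
-/

section LatticeOrderedGroup

variable {α : Type*} [Lattice α] [AddCommGroup α] [IsOrderedAddMonoid α]

theorem inf_add_posPart_sub (a b : α) : a ⊓ b + (a - b)⁺ = a := by
  rw [posPart_def, ← sub_self b, ← sup_sub, ← add_sub_assoc, inf_add_sup, add_sub_cancel_right]

theorem posPart_abs_sub_sub_le (a b u : α) : (|a - b| - (u + |b|))⁺ ≤ (|a| - u)⁺ := by
  apply posPart_mono
  calc |a - b| - (u + |b|) ≤ |a| + |b| - (u + |b|) := by
        gcongr
        simpa only [sub_eq_add_neg, abs_neg] using abs_add_le a (-b)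
    _ = |a| - u := by abel

end LatticeOrderedGroup

theorem norm_le_norm_inf_add_norm_posPart_sub {E : Type*} [NormedAddCommGroup E] [Lattice E]
    [IsOrderedAddMonoid E] (a b : E) : ‖a‖ ≤ ‖a ⊓ b‖ + ‖(a - b)⁺‖ := by
  conv_lhs => rw [← inf_add_posPart_sub a b]
  exact norm_add_le _ _

section SolidNorm

variable {E : Type*} [NormedAddCommGroup E] [Lattice E] [HasSolidNorm E] [IsOrderedAddMonoid E]

theorem norm_le_norm_of_nonneg_of_le {a b : E} (ha : 0 ≤ a) (hab : a ≤ b) : ‖a‖ ≤ ‖b‖ :=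
  HasSolidNorm.solid <| by rwa [abs_of_nonneg ha, abs_of_nonneg (ha.trans hab)]

theorem OrderConvNet.tendsto_norm_sub (hoc : HasOrderContinuousNorm E)
    {ι : Type} [Preorder ι] [IsDirected ι (· ≤ ·)] [Nonempty ι] {y : ι → E} {y₀ : E}
    (hy : OrderConvNet y y₀) : Tendsto (fun α => ‖y α - y₀‖) atTop (𝓝 0) := by
  obtain ⟨z, hz_anti, hz_glb, hz_dom⟩ := hy
  refine squeeze_zero' (Eventually.of_forall fun _ => norm_nonneg _) ?_ (hoc ι z hz_anti hz_glb)
  filter_upwards [hz_dom] with α hα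
  rw [← norm_abs_eq_norm]
  exact norm_le_norm_of_nonneg_of_le (abs_nonneg _) hα

end SolidNorm

theorem almost_order_bounded_uo_tendsto_general {E : Type*} [NormedAddCommGroup E] [Lattice E]
    [HasSolidNorm E] [IsOrderedAddMonoid E]
    (hoc : HasOrderContinuousNorm E)
    {ι : Type} [Preorder ι] [IsDirected ι (· ≤ ·)] [Nonempty ι]
    (x : ι → E) (x₀ : E)
    (haob : ∀ ε > (0 : ℝ), ∃ u : E, 0 ≤ u ∧ ∀ α, ‖(|x α| - u) ⊔ 0‖ ≤ ε)
    (huo : UOConvNet x x₀) :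
    Tendsto (fun α => ‖x α - x₀‖) atTop (𝓝 0) := by
  rw [Metric.tendsto_nhds]
  intro ε hε
  obtain ⟨u, hu, hub⟩ := haob (ε / 2) (half_pos hε)
  set v := u + |x₀|
  have hinf : Tendsto (fun α => ‖|x α - x₀| ⊓ v - 0‖) atTop (𝓝 0) :=
    (huo v (add_nonneg hu (abs_nonneg _))).tendsto_norm_sub hoc
  filter_upwards [hinf.eventually (gt_mem_nhds (half_pos hε))] with α hα
  rw [sub_zero] at hα
  have htail : ‖(|x α - x₀| - v)⁺‖ ≤ ε / 2 :=
    (norm_le_norm_of_nonneg_of_le (posPart_nonneg _) (posPart_abs_sub_sub_le _ _ _)).trans (hub α)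
  calc dist ‖x α - x₀‖ 0 = ‖|x α - x₀|‖ := by rw [Real.dist_0_eq_abs, abs_norm, norm_abs_eq_norm]
    _ ≤ ‖|x α - x₀| ⊓ v‖ + ‖(|x α - x₀| - v)⁺‖ := norm_le_norm_inf_add_norm_posPart_sub _ _
    _ < ε / 2 + ε / 2 := add_lt_add_of_lt_of_le hα htail
    _ = ε := add_halves ε

/-- In a Banach lattice with order continuous norm, every almost order bounded
uo-convergent net converges in norm. -/
theorem almost_order_bounded_uo_tendsto {E : Type*} [NormedAddCommGroup E] [Lattice E]
    [HasSolidNorm E] [IsOrderedAddMonoid E]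
    [CompleteSpace E] (hoc : HasOrderContinuousNorm E)
    {ι : Type} [Preorder ι] [IsDirected ι (· ≤ ·)] [Nonempty ι]
    (x : ι → E) (x₀ : E)
    (haob : ∀ ε > (0 : ℝ), ∃ u : E, 0 ≤ u ∧ ∀ α, ‖(|x α| - u) ⊔ 0‖ ≤ ε)
    (huo : UOConvNet x x₀) :
    Tendsto (fun α => ‖x α - x₀‖) atTop (𝓝 0) :=
  almost_order_bounded_uo_tendsto_general hoc x x₀ haob huo
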